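/- Let k be a field, R = k[x_1,x_2], and let d_1,…,d_r be positive integers with r ≥ 2 and d_1+⋯+d_r = d. If L_1,…,L_r ∈ R_1 are pairwise linearly independent linear forms, F = L_1^{d_1}⋯L_r^{d_r}, and I_P = (F/L_1,…,F/L_r), then the degree-d graded component of I_P equals the degree-d graded component of the principal ideal (L_1^{d_1−1}⋯L_r^{d_r−1}). -/

import Mathlib

/-!
The generators of `I_P` are `Φ · M i` with `Φ = ∏ L j ^ (d j - 1)` and `M i = ∏_{j ≠ i} L j`, so
`I_P = (Φ) · (M 1, …, M r)`. At a zero of `L i` every `M j` with `j ≠ i` vanishes but `M i` does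
not, so the `r` forms `M i` are linearly independent in the `r`-dimensional space of binary forms
of degree `r - 1`, hence span it, and the ideal they generate contains every form of degree `r`.
A form `Φ h` of degree `d = deg Φ + r` equals `Φ` times the degree-`r` component of `h`.
-/

open MvPolynomial Finset

namespace MvPolynomial

section CommSemiring

variable {σ R : Type*} [CommSemiring R]

attribute [local instance] gradedAlgebra in
theorem IsHomogeneous.homogeneousComponent_mul {φ : MvPolynomial σ R} {m : ℕ}
    (hφ : φ.IsHomogeneous m) (n : ℕ) (ψ : MvPolynomial σ R) :
    homogeneousComponent (m + n) (φ * ψ) = φ * homogeneousComponent n ψ := by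
  rw [← decomposition.decompose'_apply, ← decomposition.decompose'_apply]
  exact DirectSum.coe_decompose_mul_add_of_left_mem (𝒜 := homogeneousSubmodule σ R) hφ

theorem homogeneousSubmodule_succ_le_of_le {I : Ideal (MvPolynomial σ R)} {n : ℕ}
    (h : homogeneousSubmodule σ R n ≤ I.restrictScalars R) :
    homogeneousSubmodule σ R (n + 1) ≤ I.restrictScalars R := by
  rw [← homogeneousSubmodule_one_pow, pow_succ', homogeneousSubmodule_one_pow]
  exact Submodule.mul_le.2 fun a _ b hb => I.mul_mem_left a (h hb)

theorem span_singleton_mul_inf_homogeneousSubmodule {φ : MvPolynomial σ R} {m n : ℕ}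
    (hφ : φ.IsHomogeneous m) {J : Ideal (MvPolynomial σ R)}
    (hJ : homogeneousSubmodule σ R n ≤ J.restrictScalars R) :
    (Ideal.span {φ} * J).restrictScalars R ⊓ homogeneousSubmodule σ R (m + n) =
      (Ideal.span {φ}).restrictScalars R ⊓ homogeneousSubmodule σ R (m + n) := by
  refine le_antisymm (inf_le_inf_right _ (Submodule.restrictScalars_mono _ Ideal.mul_le_left)) ?_
  intro p hp
  obtain ⟨hpφ, hp⟩ := Submodule.mem_inf.1 hp
  obtain ⟨ψ, rfl⟩ := Ideal.mem_span_singleton.1 hpφ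
  refine Submodule.mem_inf.2 ⟨?_, hp⟩
  rw [Submodule.restrictScalars_mem, ← homogeneousComponent_eq_self hp,
    hφ.homogeneousComponent_mul]
  exact Ideal.mul_mem_mul (Ideal.mem_span_singleton_self φ) (hJ (homogeneousComponent_mem n ψ))

end CommSemiring

section Field

variable {σ k : Type*} [Field k]

theorem finrank_homogeneousSubmodule [Fintype σ] (n : ℕ) :
    Module.finrank k (homogeneousSubmodule σ k n) = (Fintype.card σ + n - 1).choose n := by
  classical
  rw [homogeneousSubmodule_eq_finsupp_supported, ← restrictSupport,
    Module.finrank_eq_nat_card_basis (basisRestrictSupport k {d : σ →₀ ℕ | d.degree = n}),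
    ← card_univ, ← card_finsuppAntidiag_nat_eq_choose, ← Nat.card_eq_finsetCard]
  congr! 2
  ext d
  simp [Finsupp.degree_eq_sum]

theorem finrank_homogeneousSubmodule_fin_two (n : ℕ) :
    Module.finrank k (homogeneousSubmodule (Fin 2) k n) = n + 1 := by
  rw [finrank_homogeneousSubmodule, Fintype.card_fin, show 2 + n - 1 = n + 1 by omega,
    Nat.choose_succ_self_right]

theorem IsHomogeneous.exists_eq_smul_X_add_smul_X {L : MvPolynomial (Fin 2) k}
    (hL : L.IsHomogeneous 1) : ∃ a b : k, L = a • X 0 + b • X 1 := by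
  rw [← mem_homogeneousSubmodule, homogeneousSubmodule_one_eq_span_X,
    Submodule.mem_span_range_iff_exists_fun] at hL
  obtain ⟨c, hc⟩ := hL
  exact ⟨c 0, c 1, by rw [← hc, Fin.sum_univ_two]⟩

theorem IsHomogeneous.exists_eval_eq_zero_forall_eval_ne_zero {L : MvPolynomial (Fin 2) k}
    (hL : L.IsHomogeneous 1) :
    ∃ w : Fin 2 → k, eval w L = 0 ∧ ∀ L' : MvPolynomial (Fin 2) k, L'.IsHomogeneous 1 →
      LinearIndependent k ![L, L'] → eval w L' ≠ 0 := by
  obtain ⟨a, b, rfl⟩ := hL.exists_eq_smul_X_add_smul_X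
  refine ⟨![b, -a], by simp [mul_comm], fun L' hL' hind hw => ?_⟩
  obtain ⟨a', b', rfl⟩ := hL'.exists_eq_smul_X_add_smul_X
  simp only [map_add, smul_eval, eval_X, Matrix.cons_val_zero, Matrix.cons_val_one,
    Matrix.cons_val_fin_one, mul_neg] at hw
  have hpair := LinearIndependent.pair_iff.1 hind
  -- `hw` says that the determinant `a' b - a b'` vanishes.
  have ha : a = 0 := by
    refine neg_eq_zero.1 (hpair a' (-a) ?_).2
    calc _ = (a' * b - a * b') • (X 1 : MvPolynomial (Fin 2) k) := by module
      _ = 0 := by rw [show a' * b - a * b' = 0 by linear_combination hw, zero_smul]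
  have hb : b = 0 := by
    refine neg_eq_zero.1 (hpair b' (-b) ?_).2
    calc _ = (a * b' - a' * b) • (X 0 : MvPolynomial (Fin 2) k) := by module
      _ = 0 := by rw [show a * b' - a' * b = 0 by linear_combination -hw, zero_smul]
  exact hind.ne_zero 0 (by simp [ha, hb])

variable {ι : Type*} [Fintype ι] [DecidableEq ι] {L : ι → MvPolynomial (Fin 2) k}

theorem linearIndependent_prod_erase (hL : ∀ i, (L i).IsHomogeneous 1)
    (hind : Pairwise fun i j => LinearIndependent k ![L i, L j]) :
    LinearIndependent k fun i => ∏ j ∈ univ.erase i, L j := by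
  refine Fintype.linearIndependent_iff.2 fun c hc i => ?_
  obtain ⟨w, hLi, hLj⟩ := (hL i).exists_eval_eq_zero_forall_eval_ne_zero
  have hval := congrArg (eval w) hc
  simp only [map_sum, smul_eval, map_prod, map_zero] at hval
  rw [Finset.sum_eq_single i (fun j _ hji => by
    rw [Finset.prod_eq_zero (Finset.mem_erase.2 ⟨Ne.symm hji, mem_univ i⟩) hLi, mul_zero])
    (fun h => absurd (mem_univ i) h)] at hval
  refine (mul_eq_zero.1 hval).resolve_right ?_
  exact Finset.prod_ne_zero_iff.2 fun j hj =>
    hLj _ (hL j) (hind (Finset.ne_of_mem_erase hj).symm)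

theorem isHomogeneous_prod_erase (hL : ∀ i, (L i).IsHomogeneous 1) (i : ι) :
    (∏ j ∈ univ.erase i, L j).IsHomogeneous (Fintype.card ι - 1) := by
  simpa [Finset.card_erase_of_mem (mem_univ i)] using
    IsHomogeneous.prod (univ.erase i) L (fun _ => 1) fun j _ => hL j

theorem span_prod_erase_eq_homogeneousSubmodule [Nonempty ι] (hL : ∀ i, (L i).IsHomogeneous 1)
    (hind : Pairwise fun i j => LinearIndependent k ![L i, L j]) :
    Submodule.span k (Set.range fun i => ∏ j ∈ univ.erase i, L j) =
      homogeneousSubmodule (Fin 2) k (Fintype.card ι - 1) := by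
  have : Module.Finite k (homogeneousSubmodule (Fin 2) k (Fintype.card ι - 1)) :=
    Module.Finite.iff_fg.2 (homogeneousSubmodule_fg _ _ _)
  refine Submodule.eq_of_le_of_finrank_eq
    (Submodule.span_le.2 (Set.range_subset_iff.2 (isHomogeneous_prod_erase hL))) ?_
  rw [finrank_span_eq_card (linearIndependent_prod_erase hL hind),
    finrank_homogeneousSubmodule_fin_two, Nat.sub_add_cancel Fintype.card_pos]

theorem homogeneousSubmodule_card_le_ideal_span_prod_erase [Nonempty ι]
    (hL : ∀ i, (L i).IsHomogeneous 1) (hind : Pairwise fun i j => LinearIndependent k ![L i, L j]) :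
    homogeneousSubmodule (Fin 2) k (Fintype.card ι) ≤
      (Ideal.span (Set.range fun i => ∏ j ∈ univ.erase i, L j)).restrictScalars k := by
  rw [← Nat.sub_add_cancel (Fintype.card_pos (α := ι))]
  refine homogeneousSubmodule_succ_le_of_le ?_
  rw [← span_prod_erase_eq_homogeneousSubmodule hL hind]
  exact Submodule.span_le_restrictScalars k _ _

end Field

end MvPolynomial

theorem Finset.pow_pred_mul_prod_erase_pow {ι M : Type*} [CommMonoid M] [Fintype ι]
    [DecidableEq ι] (f : ι → M) {n : ι → ℕ} (hn : ∀ j, 0 < n j) (i : ι) :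
    f i ^ (n i - 1) * ∏ j ∈ univ.erase i, f j ^ n j =
      (∏ j, f j ^ (n j - 1)) * ∏ j ∈ univ.erase i, f j := by
  rw [← mul_prod_erase univ (fun j => f j ^ (n j - 1)) (mem_univ i), mul_assoc,
    ← prod_mul_distrib]
  exact congrArg _ (prod_congr rfl fun j _ => by rw [← pow_succ, Nat.sub_add_cancel (hn j)])

/-- In `k[x₁,x₂]`, for pairwise linearly independent linear forms `L 1, …, L r` (`r ≥ 2`),
with `F = ∏ (L i)^(d i)` of degree `d`, the degree-`d` graded component of the ideal
`I_P = (F/L 1, …, F/L r)` equals the degree-`d` component of the principal ideal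
`(∏ (L i)^(d i - 1))`. -/
theorem stmt2 {k : Type*} [Field k] {r d : ℕ} (hr : 2 ≤ r)
    (dd : Fin r → ℕ) (hdd : ∀ i, 0 < dd i) (hsum : ∑ i, dd i = d)
    (L : Fin r → MvPolynomial (Fin 2) k) (hL : ∀ i, (L i).IsHomogeneous 1)
    (hind : ∀ i j, i ≠ j → LinearIndependent k ![L i, L j]) :
    Submodule.restrictScalars k
        (Ideal.span (Set.range fun i : Fin r =>
          L i ^ (dd i - 1) * ∏ j ∈ Finset.univ.erase i, L j ^ dd j))
      ⊓ homogeneousSubmodule (Fin 2) k d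
    = Submodule.restrictScalars k (Ideal.span {∏ j, L j ^ (dd j - 1)})
      ⊓ homogeneousSubmodule (Fin 2) k d := by
  have : NeZero r := ⟨by omega⟩
  have hd : d = ∑ j, (dd j - 1) + r := calc
    d = ∑ j, (dd j - 1 + 1) := hsum ▸ sum_congr rfl fun j _ => (Nat.sub_add_cancel (hdd j)).symm
    _ = ∑ j, (dd j - 1) + r := by simp only [sum_add_distrib, sum_const, card_univ,
      Fintype.card_fin, smul_eq_mul, mul_one]
  have hΦ : (∏ j, L j ^ (dd j - 1)).IsHomogeneous (∑ j, (dd j - 1)) := by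
    simpa using IsHomogeneous.prod univ _ _ fun j _ => (hL j).pow (dd j - 1)
  have hgen : Ideal.span (Set.range fun i : Fin r =>
      L i ^ (dd i - 1) * ∏ j ∈ Finset.univ.erase i, L j ^ dd j) =
      Ideal.span {∏ j, L j ^ (dd j - 1)} *
        Ideal.span (Set.range fun i => ∏ j ∈ univ.erase i, L j) := by
    rw [Ideal.span_mul_span', Set.singleton_mul, ← Set.range_comp]
    simp only [Function.comp_def, pow_pred_mul_prod_erase_pow L hdd]
  have hJ := homogeneousSubmodule_card_le_ideal_span_prod_erase hL hind
  rw [Fintype.card_fin] at hJ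
  rw [hgen, hd]
  exact span_singleton_mul_inf_homogeneousSubmodule hΦ hJ
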